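/- arXiv:2508.17701 — 4 statements merged into one kernel-verified Lean document; each statement's English description precedes it below -/
import Mathlib

section
/- For real functions f, g on [a,b] with f differentiable, g/f' monotonic on [a,b], and f'(x)/g(x) ≥ m > 0 throughout [a,b], the exponential integral satisfies |∫_a^b g(x) e^{i f(x)} dx| ≤ 4/m. -/
open MeasureTheory intervalIntegral
open Set

lemma helper_integrable {r : ℝ → ℝ} (hr : Monotone r) (c : ℂ) {C : ℝ}
    (hC : ∀ u, |r u| ≤ C) (hcre : c.re = 0) (A B : ℝ) :
    Integrable (fun u => (r u : ℂ) * Complex.exp (c * u)) (volume.restrict (Ioc A B)) := by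
  have hmeas : Measurable (fun u : ℝ => (r u : ℂ) * Complex.exp (c * u)) :=
    (Complex.measurable_ofReal.comp hr.measurable).mul
      ((Complex.continuous_exp.comp (continuous_const.mul Complex.continuous_ofReal)).measurable)
  refine Integrable.mono' (integrable_const C) hmeas.aestronglyMeasurable ?_
  filter_upwards with u
  rw [norm_mul]
  have h1 : ‖Complex.exp (c * u)‖ = 1 := by
    rw [Complex.norm_exp]
    simp [Complex.mul_re, hcre]
  rw [h1, mul_one, Complex.norm_real]
  exact hC u

lemma exp_int_bound (c : ℂ) (hcre : c.re = 0) (hc1 : ‖c‖ = 1) (t B : ℝ) :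
    ‖∫ u in t..B, Complex.exp (c * u)‖ ≤ 2 := by
  have hc0 : c ≠ 0 := by intro h; rw [h] at hc1; simp at hc1
  rw [integral_exp_mul_complex hc0, norm_div, hc1, div_one]
  have h1 : ∀ s : ℝ, ‖Complex.exp (c * s)‖ = 1 := by
    intro s
    rw [Complex.norm_exp]
    simp [Complex.mul_re, hcre]
  calc ‖Complex.exp (c * B) - Complex.exp (c * t)‖
      ≤ ‖Complex.exp (c * B)‖ + ‖Complex.exp (c * t)‖ := norm_sub_le _ _
    _ = 2 := by rw [h1, h1]; norm_num

lemma core_bound (A B M : ℝ) (c : ℂ) (hcre : c.re = 0) (hc1 : ‖c‖ = 1) (hAB : A ≤ B)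
    {ψ : ℝ → ℝ} (hψ : Monotone ψ) (h0 : ∀ u, 0 ≤ ψ u) (hM : ∀ u, ψ u ≤ M) :
    ‖∫ u in A..B, (ψ u : ℂ) * Complex.exp (c * u)‖ ≤ 2 * M := by
  set S := hψ.stieltjesFunction with hS
  set μ := S.measure with hμ
  have hSeq : ∀ u, S u = Function.rightLim ψ u := fun u => rfl
  have hS0 : ∀ u, 0 ≤ S u := fun u => (h0 u).trans (hψ.le_rightLim le_rfl)
  have hSM : ∀ u, S u ≤ M := fun u => (hψ.rightLim_le (lt_add_one u)).trans (hM _)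
  -- replace ψ by S a.e.
  have haeeq : ∀ᵐ u ∂(volume.restrict (Ioc A B)),
      (ψ u : ℂ) * Complex.exp (c * u) = (S u : ℂ) * Complex.exp (c * u) := by
    refine ae_restrict_of_ae ?_
    have hcount : Set.Countable {u | ¬ContinuousAt ψ u} := hψ.countable_not_continuousAt
    filter_upwards [hcount.ae_notMem volume] with u hu
    have hc : ContinuousAt ψ u := not_not.mp hu
    have : S u = ψ u :=
      tendsto_nhds_unique (hψ.tendsto_rightLim u)
        (hc.tendsto.mono_left nhdsWithin_le_nhds)
    rw [this]
  rw [integral_of_le hAB, integral_congr_ae haeeq]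
  -- decompose S u = S A + (S u - S A)
  have hdecomp : EqOn (fun u => (S u : ℂ) * Complex.exp (c * u))
      (fun u => (S A : ℂ) * Complex.exp (c * u) + ((S u - S A : ℝ) : ℂ) * Complex.exp (c * u))
      (Ioc A B) := by
    intro u _
    push_cast
    ring
  rw [setIntegral_congr_fun measurableSet_Ioc hdecomp]
  have hint1 : Integrable (fun u : ℝ => (S A : ℂ) * Complex.exp (c * u))
      (volume.restrict (Ioc A B)) :=
    helper_integrable (r := fun _ => S A) (fun x y _ => le_rfl) c (C := |S A|)
      (fun u => le_rfl) hcre A B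
  have hint2 : Integrable (fun u => ((S u - S A : ℝ) : ℂ) * Complex.exp (c * u))
      (volume.restrict (Ioc A B)) :=
    helper_integrable (r := fun u => S u - S A)
      (fun x y hxy => sub_le_sub_right (S.mono hxy) _) c (C := M)
      (fun u => abs_le.mpr ⟨by linarith [hS0 u, hSM A],
        by linarith [hSM u, hS0 A]⟩) hcre A B
  rw [integral_add hint1 hint2]
  haveI hμfin : IsFiniteMeasure (μ.restrict (Ioc A B)) := by
    constructor
    rw [Measure.restrict_apply_univ, hμ, StieltjesFunction.measure_Ioc]
    exact ENNReal.ofReal_lt_top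
  have hexpmeas : Measurable (fun u : ℝ => Complex.exp (c * u)) :=
    (Complex.continuous_exp.comp (continuous_const.mul Complex.continuous_ofReal)).measurable
  -- Fubini identity for the second term
  have hfub : (∫ u in Ioc A B, ((S u - S A : ℝ) : ℂ) * Complex.exp (c * u))
      = ∫ t in Ioc A B, (∫ u in Ioc t B, Complex.exp (c * u)) ∂μ := by
    have step1 : EqOn (fun u : ℝ => ((S u - S A : ℝ) : ℂ) * Complex.exp (c * u))
        (fun u : ℝ => ∫ t in Ioc A B, (Iic u).indicator (fun _ => Complex.exp (c * u)) t ∂μ)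
        (Ioc A B) := by
      intro u hu
      simp only
      rw [setIntegral_indicator measurableSet_Iic, Set.Ioc_inter_Iic,
        min_eq_right hu.2, setIntegral_const, hμ, measureReal_def, StieltjesFunction.measure_Ioc,
        ENNReal.toReal_ofReal (sub_nonneg.mpr (S.mono hu.1.le)), Complex.real_smul]
    rw [setIntegral_congr_fun measurableSet_Ioc step1]
    have hFint : Integrable (Function.uncurry
        (fun (u t : ℝ) => (Iic u).indicator (fun _ => Complex.exp (c * u)) t))
        ((volume.restrict (Ioc A B)).prod (μ.restrict (Ioc A B))) := by
      have heq : (Function.uncurry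
          (fun (u t : ℝ) => (Iic u).indicator (fun _ => Complex.exp (c * u)) t))
          = fun p : ℝ × ℝ => if p.2 ≤ p.1 then Complex.exp (c * p.1) else 0 := by
        ext p
        simp [Function.uncurry, Set.indicator_apply]
      rw [heq]
      have hmeas : Measurable (fun p : ℝ × ℝ => if p.2 ≤ p.1 then Complex.exp (c * p.1) else 0) :=
        Measurable.ite (measurableSet_le measurable_snd measurable_fst)
          (hexpmeas.comp measurable_fst) measurable_const
      refine Integrable.mono' (integrable_const 1) hmeas.aestronglyMeasurable ?_
      filter_upwards with p
      by_cases h : p.2 ≤ p.1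
      · simp only [h, if_true]
        rw [Complex.norm_exp]
        simp [Complex.mul_re, hcre]
      · simp [h]
    rw [MeasureTheory.integral_integral_swap hFint]
    refine setIntegral_congr_fun measurableSet_Ioc ?_
    intro t ht
    simp only
    have hind : ∀ u : ℝ, (Iic u).indicator (fun _ => Complex.exp (c * u)) t
        = (Ici t).indicator (fun v : ℝ => Complex.exp (c * v)) u := by
      intro u
      simp only [Set.indicator_apply, Set.mem_Iic, Set.mem_Ici]
    simp_rw [hind]
    rw [setIntegral_indicator measurableSet_Ici]
    have hset : Ioc A B ∩ Ici t = Icc t B := by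
      ext u
      constructor
      · rintro ⟨⟨_, huB⟩, htu⟩
        exact ⟨htu, huB⟩
      · rintro ⟨htu, huB⟩
        exact ⟨⟨lt_of_lt_of_le ht.1 htu, huB⟩, htu⟩
    rw [hset, integral_Icc_eq_integral_Ioc]
  -- final estimate
  have hSab : ((μ.restrict (Ioc A B)) Set.univ).toReal = S B - S A := by
    rw [Measure.restrict_apply_univ, hμ, StieltjesFunction.measure_Ioc,
      ENNReal.toReal_ofReal (sub_nonneg.mpr (S.mono hAB))]
  have hterm2 : ‖∫ u in Ioc A B, ((S u - S A : ℝ) : ℂ) * Complex.exp (c * u)‖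
      ≤ 2 * (S B - S A) := by
    rw [hfub, ← hSab]
    refine norm_integral_le_of_norm_le_const ?_
    filter_upwards with t
    by_cases htB : t ≤ B
    · rw [← integral_of_le htB]
      exact exp_int_bound c hcre hc1 t B
    · rw [Set.Ioc_eq_empty (fun h => htB h.le), Measure.restrict_empty,
        MeasureTheory.integral_zero_measure]
      norm_num
  have hterm1 : ‖∫ u in Ioc A B, (S A : ℂ) * Complex.exp (c * u)‖ ≤ S A * 2 := by
    rw [MeasureTheory.integral_const_mul, norm_mul, Complex.norm_real,
      Real.norm_of_nonneg (hS0 A), ← integral_of_le hAB]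
    exact mul_le_mul_of_nonneg_left (exp_int_bound c hcre hc1 A B) (hS0 A)
  calc ‖(∫ u in Ioc A B, (S A : ℂ) * Complex.exp (c * u)) +
        ∫ u in Ioc A B, ((S u - S A : ℝ) : ℂ) * Complex.exp (c * u)‖
      ≤ ‖∫ u in Ioc A B, (S A : ℂ) * Complex.exp (c * u)‖ +
        ‖∫ u in Ioc A B, ((S u - S A : ℝ) : ℂ) * Complex.exp (c * u)‖ := norm_add_le _ _
    _ ≤ S A * 2 + 2 * (S B - S A) := add_le_add hterm1 hterm2
    _ ≤ 2 * M := by linarith [hSM B, hS0 A]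

lemma bound_pos (A B M : ℝ) (hAB : A ≤ B) {κ : ℝ → ℝ} (hκ : Monotone κ ∨ Antitone κ)
    (h0 : ∀ u, 0 ≤ κ u) (hM : ∀ u, κ u ≤ M) :
    ‖∫ u in A..B, (κ u : ℂ) * Complex.exp (Complex.I * u)‖ ≤ 2 * M := by
  have hIre : (Complex.I).re = 0 := Complex.I_re
  have hI1 : ‖Complex.I‖ = 1 := by simp
  rcases hκ with hκ | hκ
  · exact core_bound A B M Complex.I hIre hI1 hAB hκ h0 hM
  · have hcomp : (∫ x in (-B)..(-A), (fun y => (κ y : ℂ) * Complex.exp (Complex.I * y)) (-x))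
        = ∫ x in A..B, (κ x : ℂ) * Complex.exp (Complex.I * x) := by
      rw [integral_comp_neg (fun y => (κ y : ℂ) * Complex.exp (Complex.I * y))]
      norm_num
    rw [← hcomp]
    have heq : (fun x : ℝ => (fun y => (κ y : ℂ) * Complex.exp (Complex.I * y)) (-x))
        = fun x : ℝ => ((κ (-x) : ℝ) : ℂ) * Complex.exp ((-Complex.I) * x) := by
      funext x
      have h2 : Complex.I * ((-x : ℝ) : ℂ) = (-Complex.I) * (x : ℂ) := by push_cast; ring
      simp only [h2]
    rw [heq]
    refine core_bound (-B) (-A) M (-Complex.I) (by simp) (by simp) (neg_le_neg hAB)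
      (fun x y hxy => hκ (neg_le_neg hxy)) (fun u => h0 _) (fun u => hM _)

lemma bound_main (A B M : ℝ) (hAB : A ≤ B) {ψ : ℝ → ℝ}
    (hψ : MonotoneOn ψ (Icc A B) ∨ AntitoneOn ψ (Icc A B))
    (hsign : (∀ u ∈ Icc A B, 0 ≤ ψ u ∧ ψ u ≤ M) ∨ (∀ u ∈ Icc A B, -M ≤ ψ u ∧ ψ u ≤ 0)) :
    ‖∫ u in A..B, (ψ u : ℂ) * Complex.exp (Complex.I * u)‖ ≤ 2 * M := by
  set p : ℝ → ℝ := fun u => max A (min u B) with hp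
  have hpmem : ∀ u, p u ∈ Icc A B := fun u =>
    ⟨le_max_left _ _, max_le hAB (min_le_right _ _)⟩
  have hpmono : Monotone p := fun x y hxy =>
    max_le_max le_rfl (min_le_min_right _ hxy)
  have hpid : ∀ u ∈ Icc A B, p u = u := by
    intro u hu
    rw [hp]
    simp only
    rw [min_eq_left hu.2, max_eq_right hu.1]
  set κ : ℝ → ℝ := fun u => ψ (p u) with hκdef
  have hcongr : EqOn (fun u => (ψ u : ℂ) * Complex.exp (Complex.I * u))
      (fun u => (κ u : ℂ) * Complex.exp (Complex.I * u)) (Set.uIcc A B) := by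
    intro u hu
    rw [Set.uIcc_of_le hAB] at hu
    simp only [hκdef, hpid u hu]
  rw [intervalIntegral.integral_congr hcongr]
  have hκmono : Monotone κ ∨ Antitone κ := by
    rcases hψ with h | h
    · exact Or.inl (fun x y hxy => h (hpmem x) (hpmem y) (hpmono hxy))
    · exact Or.inr (fun x y hxy => h (hpmem x) (hpmem y) (hpmono hxy))
  rcases hsign with hs | hs
  · exact bound_pos A B M hAB hκmono (fun u => (hs _ (hpmem u)).1) (fun u => (hs _ (hpmem u)).2)
  · have hneg : (fun u : ℝ => (κ u : ℂ) * Complex.exp (Complex.I * u))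
        = fun u : ℝ => -(((-κ u : ℝ) : ℂ) * Complex.exp (Complex.I * u)) := by
      funext u; push_cast; ring
    rw [hneg, intervalIntegral.integral_neg, norm_neg]
    have hκmono' : Monotone (fun u => -κ u) ∨ Antitone (fun u => -κ u) := by
      rcases hκmono with h | h
      · exact Or.inr (fun x y hxy => neg_le_neg (h hxy))
      · exact Or.inl (fun x y hxy => neg_le_neg (h hxy))
    exact bound_pos A B M hAB hκmono'
      (fun u => by simp only [neg_nonneg]; exact (hs _ (hpmem u)).2)
      (fun u => by simp only [neg_le]; linarith [(hs _ (hpmem u)).1])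

lemma pos_case (a b m : ℝ) (hab : a ≤ b) (f f' g : ℝ → ℝ)
    (hf : ∀ x ∈ Set.Icc a b, HasDerivAt f (f' x) x)
    (hmono : MonotoneOn (fun x => g x / f' x) (Set.Icc a b) ∨
      AntitoneOn (fun x => g x / f' x) (Set.Icc a b))
    (hm : 0 < m)
    (hlow : (∀ x ∈ Set.Icc a b, m ≤ f' x / g x) ∨ (∀ x ∈ Set.Icc a b, f' x / g x ≤ -m))
    (hpos : ∀ x ∈ Set.Icc a b, 0 < f' x) :
    ‖∫ x in a..b, (g x : ℂ) * Complex.exp (Complex.I * (f x : ℂ))‖ ≤ 4 / m := by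
  classical
  set s : Set ℝ := Set.Icc a b with hsdef
  have hsm : MeasurableSet s := measurableSet_Icc
  set φ : ℝ → ℝ := fun x => g x / f' x with hφdef
  -- sign facts about g
  have hgsign : (∀ x ∈ s, 0 < g x) ∨ (∀ x ∈ s, g x < 0) := by
    rcases hlow with h | h
    · left
      intro x hx
      by_contra hng
      push_neg at hng
      rcases eq_or_lt_of_le hng with hg0 | hg0
      · have := h x hx; rw [hg0, div_zero] at this; linarith
      · have : f' x / g x < 0 := div_neg_of_pos_of_neg (hpos x hx) hg0
        linarith [h x hx]
    · right
      intro x hx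
      by_contra hng
      push_neg at hng
      rcases eq_or_lt_of_le hng with hg0 | hg0
      · have := h x hx; rw [← hg0, div_zero] at this; linarith
      · have : 0 < f' x / g x := div_pos (hpos x hx) hg0
        linarith [h x hx]
  -- bounds on φ
  have hφbound : (∀ x ∈ s, 0 ≤ φ x ∧ φ x ≤ 1 / m) ∨ (∀ x ∈ s, -(1/m) ≤ φ x ∧ φ x ≤ 0) := by
    rcases hlow with h | h
    · left
      intro x hx
      have hg : 0 < g x := by
        rcases hgsign with hp | hn
        · exact hp x hx
        · exfalso
          have : f' x / g x < 0 := div_neg_of_pos_of_neg (hpos x hx) (hn x hx)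
          linarith [h x hx]
      constructor
      · exact le_of_lt (div_pos hg (hpos x hx))
      · rw [div_le_div_iff₀ (hpos x hx) hm]
        have := (le_div_iff₀ hg).mp (h x hx)
        linarith
    · right
      intro x hx
      have hg : g x < 0 := by
        rcases hgsign with hp | hn
        · exfalso
          have : 0 < f' x / g x := div_pos (hpos x hx) (hp x hx)
          linarith [h x hx]
        · exact hn x hx
      constructor
      · rw [neg_le, ← neg_div, div_le_div_iff₀ (hpos x hx) hm]
        have := (div_le_iff_of_neg hg).mp (h x hx)
        nlinarith
      · exact le_of_lt (div_neg_of_neg_of_pos hg (hpos x hx))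
  -- strict monotonicity of f
  have hcont : ContinuousOn f s := fun x hx => (hf x hx).continuousAt.continuousWithinAt
  have hsmf : StrictMonoOn f s := by
    refine strictMonoOn_of_hasDerivWithinAt_pos (convex_Icc a b) hcont
      (fun x hx => ((hf x (interior_subset hx)).hasDerivWithinAt)) ?_
    intro x hx
    exact hpos x (interior_subset hx)
  have hmonoOn : MonotoneOn f s := fun u hu v hv huv =>
    huv.eq_or_lt.elim (fun h => h ▸ le_rfl) (fun h => (hsmf hu hv h).le)
  have hinj : Set.InjOn f s := hsmf.injOn
  have hfab : f a ≤ f b := hmonoOn ⟨le_rfl, hab⟩ ⟨hab, le_rfl⟩ hab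
  have himg : f '' s = Set.Icc (f a) (f b) := by
    apply Set.Subset.antisymm
    · rintro y ⟨x, hx, rfl⟩
      exact ⟨hmonoOn ⟨le_rfl, hab⟩ hx hx.1, hmonoOn hx ⟨hab, le_rfl⟩ hx.2⟩
    · exact intermediate_value_Icc hab hcont
  -- ψ
  set ψ : ℝ → ℝ := fun u => φ (Function.invFunOn f s u) with hψdef
  have hmemimg : ∀ u ∈ Set.Icc (f a) (f b), ∃ x ∈ s, f x = u := by
    intro u hu
    have : u ∈ f '' s := himg ▸ hu
    exact this.imp (fun x hx => ⟨hx.1, hx.2⟩)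
  have hxu_mem : ∀ u ∈ Set.Icc (f a) (f b), Function.invFunOn f s u ∈ s :=
    fun u hu => Function.invFunOn_mem (hmemimg u hu)
  have hxu_eq : ∀ u ∈ Set.Icc (f a) (f b), f (Function.invFunOn f s u) = u :=
    fun u hu => Function.invFunOn_eq (hmemimg u hu)
  have hxu_le : ∀ u ∈ Set.Icc (f a) (f b), ∀ v ∈ Set.Icc (f a) (f b), u ≤ v →
      Function.invFunOn f s u ≤ Function.invFunOn f s v := by
    intro u hu v hv huv
    by_contra hlt
    push_neg at hlt
    have := hsmf (hxu_mem v hv) (hxu_mem u hu) hlt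
    rw [hxu_eq u hu, hxu_eq v hv] at this
    linarith
  have hψmono : MonotoneOn ψ (Set.Icc (f a) (f b)) ∨ AntitoneOn ψ (Set.Icc (f a) (f b)) := by
    rcases hmono with h | h
    · exact Or.inl (fun u hu v hv huv =>
        h (hxu_mem u hu) (hxu_mem v hv) (hxu_le u hu v hv huv))
    · exact Or.inr (fun u hu v hv huv =>
        h (hxu_mem u hu) (hxu_mem v hv) (hxu_le u hu v hv huv))
  have hψsign : (∀ u ∈ Set.Icc (f a) (f b), 0 ≤ ψ u ∧ ψ u ≤ 1/m) ∨
      (∀ u ∈ Set.Icc (f a) (f b), -(1/m) ≤ ψ u ∧ ψ u ≤ 0) := by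
    rcases hφbound with h | h
    · exact Or.inl (fun u hu => h _ (hxu_mem u hu))
    · exact Or.inr (fun u hu => h _ (hxu_mem u hu))
  -- change of variables
  have hCoV := integral_image_eq_integral_abs_deriv_smul hsm
    (fun x hx => (hf x hx).hasDerivWithinAt) hinj
    (fun u => (ψ u : ℂ) * Complex.exp (Complex.I * u))
  have hRHS : EqOn (fun x => |f' x| • ((ψ (f x) : ℂ) * Complex.exp (Complex.I * (f x : ℂ))))
      (fun x => (g x : ℂ) * Complex.exp (Complex.I * (f x : ℂ))) s := by
    intro x hx
    simp only
    have hinv : Function.invFunOn f s (f x) = x := hinj.leftInvOn_invFunOn hx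
    have hψfx : ψ (f x) = φ x := by rw [hψdef]; simp only [hinv]
    rw [hψfx, Complex.real_smul, abs_of_pos (hpos x hx), ← mul_assoc, ← Complex.ofReal_mul]
    have hcancel : f' x * φ x = g x := by
      rw [hφdef]
      exact mul_div_cancel₀ (g x) (ne_of_gt (hpos x hx)) ▸ by
        rw [mul_comm, div_mul_eq_mul_div, mul_div_assoc, div_self (ne_of_gt (hpos x hx)), mul_one]
    rw [hcancel]
  rw [setIntegral_congr_fun hsm hRHS] at hCoV
  have hgoal : (∫ x in a..b, (g x : ℂ) * Complex.exp (Complex.I * (f x : ℂ)))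
      = ∫ u in (f a)..(f b), (ψ u : ℂ) * Complex.exp (Complex.I * u) := by
    rw [integral_of_le hab, integral_of_le hfab, ← integral_Icc_eq_integral_Ioc,
      ← integral_Icc_eq_integral_Ioc, ← hCoV, himg]
  rw [hgoal]
  calc ‖∫ u in (f a)..(f b), (ψ u : ℂ) * Complex.exp (Complex.I * u)‖
      ≤ 2 * (1/m) := bound_main (f a) (f b) (1/m) hfab hψmono hψsign
    _ ≤ 4 / m := by
        rw [mul_one_div]
        exact (div_le_div_iff_of_pos_right hm).mpr (by norm_num)

/-- Titchmarsh's first-derivative test (Lemma 4.3): if `f` is differentiable with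
derivative `f'` on `[a,b]`, `g/f'` is monotone on `[a,b]`, and `f'/g ≥ m > 0` there,
then `|∫_a^b g(x) e^{i f(x)} dx| ≤ 4/m`. -/
theorem stmt_0 (a b m : ℝ) (hab : a ≤ b) (f f' g : ℝ → ℝ)
    (hf : ∀ x ∈ Set.Icc a b, HasDerivAt f (f' x) x)
    (hmono : MonotoneOn (fun x => g x / f' x) (Set.Icc a b) ∨
      AntitoneOn (fun x => g x / f' x) (Set.Icc a b))
    (hm : 0 < m)
    (hlow : (∀ x ∈ Set.Icc a b, m ≤ f' x / g x) ∨ (∀ x ∈ Set.Icc a b, f' x / g x ≤ -m)) :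
    ‖∫ x in a..b, (g x : ℂ) * Complex.exp (Complex.I * (f x : ℂ))‖ ≤ 4 / m := by
  have hne : ∀ x ∈ Set.Icc a b, f' x ≠ 0 := by
    intro x hx h0
    rcases hlow with h | h
    · have := h x hx; rw [h0, zero_div] at this; linarith
    · have := h x hx; rw [h0, zero_div] at this; linarith
  have hsign : (∀ x ∈ Set.Icc a b, 0 < f' x) ∨ (∀ x ∈ Set.Icc a b, f' x < 0) := by
    by_contra hcon
    push_neg at hcon
    obtain ⟨⟨x, hx, hx0⟩, ⟨y, hy, hy0⟩⟩ := hcon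
    have hxneg : f' x < 0 := lt_of_le_of_ne hx0 (hne x hx)
    have hypos : 0 < f' y := lt_of_le_of_ne hy0 (Ne.symm (hne y hy))
    have hxy : x ≠ y := fun h => by rw [h] at hxneg; linarith
    rcases lt_or_gt_of_ne hxy with hlt | hgt
    · have hsub : Set.Icc x y ⊆ Set.Icc a b := Set.Icc_subset_Icc hx.1 hy.2
      obtain ⟨c, hc, hc0⟩ := exists_hasDerivWithinAt_eq_of_gt_of_lt hlt.le
        (fun z hz => (hf z (hsub hz)).hasDerivWithinAt) hxneg hypos
      exact hne c (hsub (Set.Ioo_subset_Icc_self hc)) hc0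
    · have hsub : Set.Icc y x ⊆ Set.Icc a b := Set.Icc_subset_Icc hy.1 hx.2
      obtain ⟨c, hc, hc0⟩ := exists_hasDerivWithinAt_eq_of_lt_of_gt hgt.le
        (fun z hz => (hf z (hsub hz)).hasDerivWithinAt) hypos hxneg
      exact hne c (hsub (Set.Ioo_subset_Icc_self hc)) hc0
  rcases hsign with hpos | hneg
  · exact pos_case a b m hab f f' g hf hmono hm hlow hpos
  · -- reduce to the positive case via x ↦ -x
    have hmem : ∀ y ∈ Set.Icc (-b) (-a), -y ∈ Set.Icc a b := by
      intro y hy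
      exact ⟨by linarith [hy.2], by linarith [hy.1]⟩
    have hf' : ∀ y ∈ Set.Icc (-b) (-a), HasDerivAt (fun z => f (-z)) (-f' (-y)) y := by
      intro y hy
      have h1 := HasDerivAt.comp y (hf (-y) (hmem y hy)) (hasDerivAt_neg y)
      have h2 : f' (-y) * (-1) = -f' (-y) := by ring
      rw [h2] at h1
      exact h1
    have hmono' : MonotoneOn (fun y => g (-y) / (fun z => -f' (-z)) y) (Set.Icc (-b) (-a)) ∨
        AntitoneOn (fun y => g (-y) / (fun z => -f' (-z)) y) (Set.Icc (-b) (-a)) := by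
      have key : ∀ y, g (-y) / (fun z => -f' (-z)) y = -(g (-y) / f' (-y)) := by
        intro y; simp only; rw [div_neg]
      rcases hmono with h | h
      · left
        intro u hu v hv huv
        show g (-u) / (fun z => -f' (-z)) u ≤ g (-v) / (fun z => -f' (-z)) v
        rw [key u, key v, neg_le_neg_iff]
        exact h (hmem v hv) (hmem u hu) (by linarith)
      · right
        intro u hu v hv huv
        show g (-v) / (fun z => -f' (-z)) v ≤ g (-u) / (fun z => -f' (-z)) u
        rw [key v, key u, neg_le_neg_iff]
        exact h (hmem v hv) (hmem u hu) (by linarith)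
    have hlow' : (∀ y ∈ Set.Icc (-b) (-a), m ≤ (fun z => -f' (-z)) y / g (-y)) ∨
        (∀ y ∈ Set.Icc (-b) (-a), (fun z => -f' (-z)) y / g (-y) ≤ -m) := by
      have key : ∀ y, (fun z => -f' (-z)) y / g (-y) = -(f' (-y) / g (-y)) := by
        intro y; simp only; rw [neg_div]
      rcases hlow with h | h
      · right
        intro y hy
        rw [key y]
        linarith [h (-y) (hmem y hy)]
      · left
        intro y hy
        rw [key y]
        linarith [h (-y) (hmem y hy)]
    have hpos' : ∀ y ∈ Set.Icc (-b) (-a), 0 < (fun z => -f' (-z)) y := by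
      intro y hy
      simp only
      linarith [hneg (-y) (hmem y hy)]
    have hres := pos_case (-b) (-a) m (by linarith) (fun z => f (-z)) (fun z => -f' (-z))
      (fun z => g (-z)) hf' hmono' hm hlow' hpos'
    have hcomp : (∫ y in (-b)..(-a),
        (fun x => (g x : ℂ) * Complex.exp (Complex.I * (f x : ℂ))) (-y))
        = ∫ x in a..b, (g x : ℂ) * Complex.exp (Complex.I * (f x : ℂ)) := by
      rw [integral_comp_neg (fun x => (g x : ℂ) * Complex.exp (Complex.I * (f x : ℂ)))]
      norm_num
    rw [← hcomp]
    exact hres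
end

section
/- There exists a constant C > 0 (depending on δ > 0 and c > 0) such that for all x ≥ 2, ∫_1^∞ γ^{-1-δ} x^{-c/log γ} dγ ≤ C · exp(−sqrt(cδ log x)). -/
open MeasureTheory Real

theorem stmt_9 (δ c : ℝ) (hδ : 0 < δ) (hc : 0 < c) :
    ∃ C : ℝ, 0 < C ∧ ∀ x : ℝ, 2 ≤ x →
      (∫ γ in Set.Ioi (1 : ℝ), γ ^ (-1 - δ) * x ^ (-c / Real.log γ))
        ≤ C * Real.exp (-Real.sqrt (c * δ * Real.log x)) := by
  refine ⟨2 / δ, by positivity, fun x hx => ?_⟩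
  have hx1 : (1 : ℝ) < x := lt_of_lt_of_le one_lt_two hx
  have hx0 : (0 : ℝ) < x := by linarith
  have hlx : 0 < Real.log x := Real.log_pos hx1
  set E := Real.exp (-Real.sqrt (c * δ * Real.log x)) with hE
  have hE0 : 0 < E := Real.exp_pos _
  have key : ∀ γ ∈ Set.Ioi (1 : ℝ),
      γ ^ (-1 - δ) * x ^ (-c / Real.log γ) ≤ E * γ ^ (-1 - δ / 2) := by
    intro γ hγ
    have hγ1 : 1 < γ := hγ
    have hγ0 : 0 < γ := by linarith
    have hL : 0 < Real.log γ := Real.log_pos hγ1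
    have hsplit : γ ^ (-1 - δ) = γ ^ (-1 - δ / 2) * γ ^ (-(δ / 2)) := by
      rw [← Real.rpow_add hγ0]; ring_nf
    rw [hsplit, mul_assoc, mul_comm E]
    refine mul_le_mul_of_nonneg_left ?_ (Real.rpow_nonneg hγ0.le _)
    rw [Real.rpow_def_of_pos hγ0, Real.rpow_def_of_pos hx0, ← Real.exp_add, hE,
      Real.exp_le_exp]
    have hT : Real.sqrt (c * δ * Real.log x)
        ≤ δ / 2 * Real.log γ + c * Real.log x / Real.log γ := by
      have hcan : c * Real.log x / Real.log γ * Real.log γ = c * Real.log x :=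
        div_mul_cancel₀ _ hL.ne'
      have h2 : c * δ * Real.log x
          ≤ (δ / 2 * Real.log γ + c * Real.log x / Real.log γ) ^ 2 := by
        nlinarith [sq_nonneg (δ / 2 * Real.log γ - c * Real.log x / Real.log γ),
          mul_pos hc hlx, hL, hδ]
      calc Real.sqrt (c * δ * Real.log x)
          ≤ Real.sqrt ((δ / 2 * Real.log γ + c * Real.log x / Real.log γ) ^ 2) :=
            Real.sqrt_le_sqrt h2
        _ = δ / 2 * Real.log γ + c * Real.log x / Real.log γ := Real.sqrt_sq (by positivity)
    have e1 : Real.log γ * -(δ / 2) + Real.log x * (-c / Real.log γ)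
        = -(δ / 2 * Real.log γ + c * Real.log x / Real.log γ) := by ring
    linarith [hT, e1.ge, e1.le]
  have hint_g : IntegrableOn (fun t : ℝ => t ^ (-1 - δ / 2)) (Set.Ioi 1) :=
    integrableOn_Ioi_rpow_of_lt (by linarith) one_pos
  have hint_h : IntegrableOn (fun t : ℝ => E * t ^ (-1 - δ / 2)) (Set.Ioi 1) :=
    hint_g.const_mul E
  have hmeas : Measurable fun γ : ℝ => γ ^ (-1 - δ) * x ^ (-c / Real.log γ) := by
    measurability
  have hint_f : IntegrableOn (fun γ : ℝ => γ ^ (-1 - δ) * x ^ (-c / Real.log γ))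
      (Set.Ioi 1) := by
    refine hint_h.mono' hmeas.aestronglyMeasurable ?_
    filter_upwards [ae_restrict_mem measurableSet_Ioi] with γ hγ
    have hγ0 : (0 : ℝ) < γ := lt_trans one_pos hγ
    rw [Real.norm_eq_abs, abs_of_nonneg (by positivity)]
    exact key γ hγ
  calc ∫ γ in Set.Ioi (1 : ℝ), γ ^ (-1 - δ) * x ^ (-c / Real.log γ)
      ≤ ∫ γ in Set.Ioi (1 : ℝ), E * γ ^ (-1 - δ / 2) :=
        setIntegral_mono_on hint_f hint_h measurableSet_Ioi key
    _ = E * ∫ γ in Set.Ioi (1 : ℝ), γ ^ (-1 - δ / 2) := integral_const_mul E _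
    _ = E * (2 / δ) := by
        rw [integral_Ioi_rpow_of_lt (by linarith) one_pos, Real.one_rpow]
        congr 1
        rw [show (-1 : ℝ) - δ / 2 + 1 = -(δ / 2) by ring]
        field_simp
    _ = 2 / δ * E := mul_comm _ _
end

section
/- Fix β > 0 and y > 0 with y > βx, and let x > e. Define f(u) = −βxu + y log u and g(u) = log u on [1/x, 1]. Then f'(u) ≠ 0 on [1/x, 1], there is exactly one point u₀ ∈ (1/e, 1) ∩ [1/x, 1] where (g/f')'(u₀) = 0, at that point g(u₀)/f'(u₀) = −u₀/y, and |g(u)/f'(u)| ≤ 1/y for all u ∈ [1/x, 1]. -/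
open Real Set

lemma deriv_h (c y u : ℝ) (hu : 0 < u) (hd : -c + y/u ≠ 0) :
    deriv (fun u => Real.log u / (-c + y / u)) u
      = ((-(c*u) + y) + y * Real.log u) / ((-(c*u) + y)^2) := by
  have hne : u ≠ 0 := ne_of_gt hu
  have h1 : HasDerivAt (fun u : ℝ => -c + y / u) (y * (-(u^2)⁻¹)) u := by
    simpa [div_eq_mul_inv] using (((hasDerivAt_inv hne).const_mul y).const_add (-c))
  have h2 : HasDerivAt (fun u : ℝ => Real.log u / (-c + y / u))
      ((u⁻¹ * (-c + y/u) - Real.log u * (y * (-(u^2)⁻¹))) / (-c + y/u)^2) u :=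
    (Real.hasDerivAt_log hne).div h1 hd
  rw [h2.deriv]
  have hd2 : (-c + y/u)^2 ≠ 0 := pow_ne_zero _ hd
  have hcu : -(c*u) + y = u * (-c + y/u) := by field_simp
  rw [div_eq_div_iff hd2 (by rw [hcu]; positivity)]
  rw [hcu]
  field_simp
  ring

theorem stmt_10 (β y x : ℝ) (hβ : 0 < β) (hy : 0 < y) (hx : Real.exp 1 < x)
    (hyx : β * x < y) :
    (∀ u ∈ Icc x⁻¹ 1, -(β * x) + y / u ≠ 0) ∧
    (∃! u₀ : ℝ, u₀ ∈ Ioo (Real.exp 1)⁻¹ 1 ∧ u₀ ∈ Icc x⁻¹ 1 ∧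
      deriv (fun u => Real.log u / (-(β * x) + y / u)) u₀ = 0) ∧
    (∀ u₀ : ℝ, u₀ ∈ Ioo (Real.exp 1)⁻¹ 1 → u₀ ∈ Icc x⁻¹ 1 →
      deriv (fun u => Real.log u / (-(β * x) + y / u)) u₀ = 0 →
      Real.log u₀ / (-(β * x) + y / u₀) = -u₀ / y) ∧
    (∀ u ∈ Icc x⁻¹ 1, |Real.log u / (-(β * x) + y / u)| ≤ 1 / y) := by
  set c := β * x with hc
  have he : (1:ℝ) < Real.exp 1 := by nlinarith [Real.add_one_le_exp 1]
  have hx0 : 0 < x := lt_trans (by linarith) hx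
  have hc0 : 0 < c := mul_pos hβ hx0
  have hepos : (0:ℝ) < Real.exp 1 := by linarith
  have hxinv : x⁻¹ < (Real.exp 1)⁻¹ := by
    exact inv_strictAnti₀ hepos hx
  have heinv1 : (Real.exp 1)⁻¹ < 1 := inv_lt_one_of_one_lt₀ he
  have heinv0 : (0:ℝ) < (Real.exp 1)⁻¹ := inv_pos.mpr hepos
  -- positivity of denominator on (0,1]
  have hdpos : ∀ u : ℝ, 0 < u → u ≤ 1 → 0 < -c + y / u := by
    intro u hu hu1
    have h1 : y ≤ y / u := by
      rw [le_div_iff₀ hu]; nlinarith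
    linarith
  -- equivalence between deriv = 0 and φ = 0
  set φ : ℝ → ℝ := fun u => (-(c*u) + y) + y * Real.log u with hφdef
  have hequiv : ∀ u : ℝ, 0 < u → u ≤ 1 →
      (deriv (fun u => Real.log u / (-c + y / u)) u = 0 ↔ φ u = 0) := by
    intro u hu hu1
    have hd := hdpos u hu hu1
    rw [deriv_h c y u hu (ne_of_gt hd)]
    have hnum : (0:ℝ) < -(c*u) + y := by nlinarith
    rw [div_eq_zero_iff]
    constructor
    · rintro (h | h)
      · exact h
      · exact absurd h (pow_ne_zero _ (ne_of_gt hnum))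
    · exact fun h => Or.inl h
  -- continuity of φ
  have hcont : ContinuousOn φ (Icc (Real.exp 1)⁻¹ 1) := by
    apply ContinuousOn.add
    · exact (Continuous.continuousOn (by continuity))
    · exact continuousOn_const.mul (Real.continuousOn_log.mono
        (fun u hu => by simp; exact ne_of_gt (lt_of_lt_of_le heinv0 hu.1)))
  -- strict monotonicity of φ
  have hmono : StrictMonoOn φ (Icc (Real.exp 1)⁻¹ 1) := by
    apply strictMonoOn_of_deriv_pos (convex_Icc _ _) hcont
    intro u hu
    rw [interior_Icc] at hu
    have hu0 : 0 < u := lt_trans heinv0 hu.1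
    have hder : HasDerivAt φ (-c + y * u⁻¹) u := by
      have h1 : HasDerivAt (fun u : ℝ => -(c*u) + y) (-c) u := by
        simpa using ((hasDerivAt_id u).const_mul (-c)).add_const y
      have h2 := (Real.hasDerivAt_log (ne_of_gt hu0)).const_mul y
      exact h1.add h2
    rw [hder.deriv]
    have : 1 < u⁻¹ := (one_lt_inv₀ hu0).mpr hu.2
    nlinarith
  -- existence of root via IVT
  have hφa : φ (Real.exp 1)⁻¹ = -(c * (Real.exp 1)⁻¹) := by
    simp [hφdef, Real.log_inv, Real.log_exp]
  have hφb : φ 1 = -c + y := by simp [hφdef]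
  obtain ⟨u₀, hu₀mem, hu₀root⟩ :
      ∃ u₀ ∈ Ioo (Real.exp 1)⁻¹ 1, φ u₀ = 0 := by
    have := intermediate_value_Ioo (le_of_lt heinv1) hcont
    have h0 : (0:ℝ) ∈ Ioo (φ (Real.exp 1)⁻¹) (φ 1) := by
      rw [hφa, hφb]
      constructor
      · have : 0 < c * (Real.exp 1)⁻¹ := mul_pos hc0 heinv0
        linarith
      · linarith
    obtain ⟨u₀, hmem, heq⟩ := this h0
    exact ⟨u₀, hmem, heq⟩
  have hu₀0 : 0 < u₀ := lt_trans heinv0 hu₀mem.1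
  have hu₀Icc : u₀ ∈ Icc x⁻¹ 1 := ⟨le_of_lt (lt_trans hxinv hu₀mem.1), le_of_lt hu₀mem.2⟩
  refine ⟨?_, ?_, ?_, ?_⟩
  · -- part 1
    intro u hu
    have hu0 : 0 < u := lt_of_lt_of_le (inv_pos.mpr hx0) hu.1
    exact ne_of_gt (hdpos u hu0 hu.2)
  · -- part 2
    refine ⟨u₀, ⟨hu₀mem, hu₀Icc, ?_⟩, ?_⟩
    · exact (hequiv u₀ hu₀0 (le_of_lt hu₀mem.2)).mpr hu₀root
    · rintro u₁ ⟨h1mem, h1Icc, h1der⟩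
      have h1root : φ u₁ = 0 := (hequiv u₁ (lt_trans heinv0 h1mem.1) (le_of_lt h1mem.2)).mp h1der
      exact hmono.injOn (Ioo_subset_Icc_self h1mem) (Ioo_subset_Icc_self hu₀mem)
        (by rw [h1root, hu₀root])
  · -- part 3
    intro u₁ h1mem _ h1der
    have hu10 : 0 < u₁ := lt_trans heinv0 h1mem.1
    have h1root : φ u₁ = 0 := (hequiv u₁ hu10 (le_of_lt h1mem.2)).mp h1der
    have hd := hdpos u₁ hu10 (le_of_lt h1mem.2)
    have key : y * Real.log u₁ = c * u₁ - y := by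
      simp only [hφdef] at h1root; linarith
    rw [div_eq_div_iff (ne_of_gt hd) (ne_of_gt hy)]
    have hcancel : u₁ * (y / u₁) = y := by field_simp
    nlinarith [key, hcancel]
  · -- part 4
    intro u hu
    have hu0 : 0 < u := lt_of_lt_of_le (inv_pos.mpr hx0) hu.1
    have hu1 : u ≤ 1 := hu.2
    have hd := hdpos u hu0 hu1
    have hL : Real.log u ≤ 0 := Real.log_nonpos (le_of_lt hu0) hu1
    rw [abs_div, abs_of_nonpos hL, abs_of_pos hd, div_le_div_iff₀ hd hy]
    have hlog : -Real.log u ≤ u⁻¹ - 1 := by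
      have := Real.log_le_sub_one_of_pos (inv_pos.mpr hu0)
      rwa [Real.log_inv] at this
    have hdm : y / u = y * u⁻¹ := div_eq_mul_inv y u
    have h1 : (-Real.log u) * y ≤ (u⁻¹ - 1) * y :=
      mul_le_mul_of_nonneg_right hlog (le_of_lt hy)
    rw [hdm]
    linarith
end

section
/- For x > 1 and s ∈ ℂ with Re(s) > 0, ∫_1^x e^{-2πiαu} u^{-s-2} Φ(u^{-2}, 1, 1 + s/2) (1 − log u/log x) du = ∫_1^∞ e^{-2πiαu} u^{-s-2} Φ(u^{-2}, 1, 1 + s/2) du + O(1/log x) as x → ∞, where Φ(z, 1, a) = Σ_{n=0}^∞ z^n/(n + a) is the Lerch transcendent; the infinite integral converges absolutely and the implied constant depends on Re(s) and α. -/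
open Real Complex MeasureTheory intervalIntegral

open Set Filter Topology in
private noncomputable def Gaux (u : ℝ) : ℝ := 4 * Real.sqrt (1 - u⁻¹)

private noncomputable def gaux (u : ℝ) : ℝ := 2 / (u ^ 2 * Real.sqrt (1 - u⁻¹))

private lemma gaux_nonneg (u : ℝ) : 0 ≤ gaux u := by
  unfold gaux; positivity

private lemma continuousAt_Gaux {a : ℝ} (ha : a ≠ 0) : ContinuousAt Gaux a :=
  continuousAt_const.mul ((Real.continuous_sqrt.continuousAt).comp
    (continuousAt_const.sub (continuousAt_inv₀ ha)))

private lemma hasDerivAt_Gaux {u : ℝ} (hu : 1 < u) : HasDerivAt Gaux (gaux u) u := by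
  have hu0 : (0:ℝ) < u := lt_trans one_pos hu
  have h1 : 0 < 1 - u⁻¹ := by
    rw [sub_pos]
    exact inv_lt_one_of_one_lt₀ hu
  have hd1 : HasDerivAt (fun x : ℝ => 1 - x⁻¹) ((u ^ 2)⁻¹) u := by
    simpa using (hasDerivAt_inv hu0.ne').const_sub 1
  have hd2 := ((Real.hasDerivAt_sqrt h1.ne').comp u hd1).const_mul (4:ℝ)
  refine hd2.congr_deriv ?_
  unfold gaux
  have hs : Real.sqrt (1 - u⁻¹) ≠ 0 := by positivity
  field_simp
  ring

open Filter Topology in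
private lemma tendsto_Gaux : Tendsto Gaux atTop (nhds 4) := by
  have h : Tendsto (fun u : ℝ => 1 - u⁻¹) atTop (nhds 1) := by
    simpa using (tendsto_const_nhds (x := (1:ℝ)) (f := atTop)).sub tendsto_inv_atTop_zero
  have h2 := (Real.continuous_sqrt.tendsto 1).comp h
  unfold Gaux
  simpa [Gaux, Real.sqrt_one, Function.comp] using h2.const_mul (4:ℝ)

private lemma integrableOn_gaux {a : ℝ} (ha : 1 ≤ a) : IntegrableOn gaux (Set.Ioi a) := by
  have h0 : a ≠ 0 := by positivity
  exact integrableOn_Ioi_deriv_of_nonneg (continuousAt_Gaux h0).continuousWithinAt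
    (fun x hx => hasDerivAt_Gaux (lt_of_le_of_lt ha hx)) (fun x _ => gaux_nonneg x) tendsto_Gaux

private lemma integral_gaux_Ioi {a : ℝ} (ha : 1 ≤ a) : ∫ u in Set.Ioi a, gaux u = 4 - Gaux a := by
  have h0 : a ≠ 0 := by positivity
  exact integral_Ioi_of_hasDerivAt_of_tendsto (continuousAt_Gaux h0).continuousWithinAt
    (fun x hx => hasDerivAt_Gaux (lt_of_le_of_lt ha hx)) (integrableOn_gaux ha) tendsto_Gaux

private lemma neg_log_le {t : ℝ} (ht0 : 0 < t) (ht1 : t < 1) :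
    -Real.log (1 - t) ≤ 2 * t / Real.sqrt (1 - t) := by
  have hv : (0:ℝ) < 1 - t := by linarith
  have hsq : 0 < Real.sqrt (1 - t) := Real.sqrt_pos.2 hv
  have h1 : Real.log ((Real.sqrt (1 - t))⁻¹) ≤ (Real.sqrt (1 - t))⁻¹ - 1 :=
    Real.log_le_sub_one_of_pos (by positivity)
  have h2 : Real.log (1 - t) = 2 * Real.log (Real.sqrt (1 - t)) := by
    rw [Real.log_sqrt hv.le]; ring
  rw [Real.log_inv] at h1
  have h3 : 1 - t ≤ Real.sqrt (1 - t) := by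
    nlinarith [Real.sq_sqrt hv.le, Real.sqrt_nonneg (1 - t)]
  rw [h2, le_div_iff₀ hsq]
  nlinarith [mul_le_mul_of_nonneg_right h1 hsq.le, mul_inv_cancel₀ hsq.ne']

private lemma hasSum_aux {t : ℝ} (ht0 : 0 < t) (ht1 : t < 1) :
    HasSum (fun n : ℕ => t ^ n / (n + 1)) (-Real.log (1 - t) / t) := by
  have h1 := Real.hasSum_pow_div_log_of_abs_lt_one (x := t) (by rw [abs_of_pos ht0]; exact ht1)
  have h2 := h1.mul_left t⁻¹
  rw [← div_eq_inv_mul] at h2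
  refine (funext fun n => ?_ : (fun n : ℕ => t ^ n / (n + 1)) = _) ▸ h2
  rw [pow_succ]
  field_simp

private lemma lerch_term_le (s : ℂ) (hs : 0 < s.re) {t : ℝ} (ht0 : 0 < t) (n : ℕ) :
    ‖(t:ℂ) ^ n / ((n : ℂ) + (1 + s / 2))‖ ≤ t ^ n / (n + 1) := by
  rw [norm_div, norm_pow]
  have h1 : ‖(t:ℂ)‖ = t := by rw [Complex.norm_real, Real.norm_of_nonneg ht0.le]
  have h2 : (n:ℝ) + 1 ≤ ‖(n : ℂ) + (1 + s / 2)‖ := by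
    have h := Complex.abs_re_le_norm ((n : ℂ) + (1 + s / 2))
    have hre : ((n : ℂ) + (1 + s / 2)).re = n + 1 + s.re / 2 := by simp; ring
    calc (n:ℝ) + 1 ≤ n + 1 + s.re / 2 := by linarith
      _ ≤ |((n : ℂ) + (1 + s / 2)).re| := by rw [hre]; exact le_abs_self _
      _ ≤ _ := h
  rw [h1]
  have hd : (0:ℝ) < (n:ℝ) + 1 := by positivity
  exact div_le_div_of_nonneg_left (by positivity) hd h2

private lemma lerch_summable (s : ℂ) (hs : 0 < s.re) {t : ℝ} (ht0 : 0 < t) (ht1 : t < 1) :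
    Summable (fun n : ℕ => (t:ℂ) ^ n / ((n : ℂ) + (1 + s / 2))) := by
  apply Summable.of_norm
  exact Summable.of_nonneg_of_le (fun n => norm_nonneg _) (lerch_term_le s hs ht0)
    (hasSum_aux ht0 ht1).summable

/-- The Lerch transcendent at `s = 1`: `Φ(z, 1, a) = Σ_{n≥0} z^n/(n + a)`. -/
noncomputable def lerchPhiOne (z a : ℂ) : ℂ := ∑' n : ℕ, z ^ n / ((n : ℂ) + a)

private lemma lerch_norm_le (s : ℂ) (hs : 0 < s.re) {t : ℝ} (ht0 : 0 < t) (ht1 : t < 1) :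
    ‖lerchPhiOne ((t:ℂ)) (1 + s / 2)‖ ≤ 2 / Real.sqrt (1 - t) := by
  have hsum := hasSum_aux ht0 ht1
  have hsummable : Summable fun n : ℕ => ‖(t:ℂ) ^ n / ((n : ℂ) + (1 + s / 2))‖ :=
    Summable.of_nonneg_of_le (fun n => norm_nonneg _) (lerch_term_le s hs ht0) hsum.summable
  calc ‖lerchPhiOne ((t:ℂ)) (1 + s / 2)‖ ≤ ∑' n : ℕ, ‖(t:ℂ) ^ n / ((n : ℂ) + (1 + s / 2))‖ :=
        norm_tsum_le_tsum_norm hsummable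
    _ ≤ ∑' n : ℕ, t ^ n / (n + 1) := Summable.tsum_le_tsum (lerch_term_le s hs ht0) hsummable hsum.summable
    _ = -Real.log (1 - t) / t := hsum.tsum_eq
    _ ≤ (2 * t / Real.sqrt (1 - t)) / t := by
        gcongr ?x / t
        exact neg_log_le ht0 ht1
    _ = 2 / Real.sqrt (1 - t) := by
        rw [div_right_comm, mul_div_assoc, div_self ht0.ne', mul_one]

private lemma hz_cast {u : ℝ} : ((u:ℂ))⁻¹ ^ 2 = ((u⁻¹ ^ 2 : ℝ) : ℂ) := by push_cast; ring

private lemma inv_sq_lt_one {u : ℝ} (hu : 1 < u) : u⁻¹ ^ 2 < 1 := by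
  have hu0 : (0:ℝ) < u := by linarith
  have : u⁻¹ < 1 := inv_lt_one_of_one_lt₀ hu
  nlinarith [inv_pos.2 hu0]

private lemma F_norm_le (α : ℝ) (s : ℂ) (hs : 0 < s.re) {u : ℝ} (hu : 1 < u) :
    ‖Complex.exp (-(2 * ↑π * Complex.I * ↑α * ↑u)) * (u:ℂ) ^ (-s - 2) *
      lerchPhiOne (((u:ℂ))⁻¹ ^ 2) (1 + s / 2)‖ ≤ gaux u := by
  have hu0 : (0:ℝ) < u := by linarith
  have hinv : (0:ℝ) < u⁻¹ ^ 2 := by positivity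
  have hinv1 : u⁻¹ ^ 2 < 1 := inv_sq_lt_one hu
  have h1 : ‖Complex.exp (-(2 * ↑π * Complex.I * ↑α * ↑u))‖ = 1 := by
    have h : -(2 * (π:ℂ) * Complex.I * ↑α * ↑u) = ((-(2 * π * α * u) : ℝ) : ℂ) * Complex.I := by
      push_cast; ring
    rw [h, Complex.norm_exp_ofReal_mul_I]
  have h2 : ‖(u:ℂ) ^ (-s - 2)‖ ≤ u ^ (-2 : ℝ) := by
    rw [Complex.norm_cpow_eq_rpow_re_of_pos hu0]
    apply Real.rpow_le_rpow_of_exponent_le hu.le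
    have hre : (-s - 2).re = -s.re - 2 := by simp
    rw [hre]
    linarith
  have h3 : ‖lerchPhiOne (((u:ℂ))⁻¹ ^ 2) (1 + s / 2)‖ ≤ 2 / Real.sqrt (1 - u⁻¹ ^ 2) := by
    rw [hz_cast]
    exact lerch_norm_le s hs hinv hinv1
  calc ‖Complex.exp (-(2 * ↑π * Complex.I * ↑α * ↑u)) * (u:ℂ) ^ (-s - 2) *
          lerchPhiOne (((u:ℂ))⁻¹ ^ 2) (1 + s / 2)‖
      = ‖Complex.exp (-(2 * ↑π * Complex.I * ↑α * ↑u))‖ * ‖(u:ℂ) ^ (-s - 2)‖ *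
          ‖lerchPhiOne (((u:ℂ))⁻¹ ^ 2) (1 + s / 2)‖ := by rw [norm_mul, norm_mul]
    _ ≤ 1 * u ^ (-2 : ℝ) * (2 / Real.sqrt (1 - u⁻¹ ^ 2)) := by
        exact mul_le_mul (mul_le_mul h1.le h2 (norm_nonneg _) (by norm_num)) h3
          (norm_nonneg _) (by positivity)
    _ ≤ gaux u := by
        rw [one_mul]
        have hrp : u ^ (-2 : ℝ) = (u ^ 2)⁻¹ := by
          rw [← Real.rpow_natCast u 2, ← Real.rpow_neg hu0.le]
          norm_num
        rw [hrp]
        unfold gaux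
        have hmono : Real.sqrt (1 - u⁻¹) ≤ Real.sqrt (1 - u⁻¹ ^ 2) := by
          apply Real.sqrt_le_sqrt
          have h5 : u⁻¹ ^ 2 ≤ u⁻¹ := by
            nlinarith [inv_pos.2 hu0, inv_lt_one_of_one_lt₀ hu]
          linarith
        have hvpos : (0:ℝ) < 1 - u⁻¹ := by
          rw [sub_pos]; exact inv_lt_one_of_one_lt₀ hu
        have hs1 : 0 < Real.sqrt (1 - u⁻¹) := Real.sqrt_pos.2 hvpos
        rw [inv_mul_eq_div, div_div]
        apply div_le_div_of_nonneg_left (by norm_num) (by positivity)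
        nlinarith [mul_le_mul_of_nonneg_left hmono (sq_nonneg u)]

private lemma log_le_two_sqrt {u : ℝ} (hu : 1 < u) : Real.log u ≤ 2 * Real.sqrt (u - 1) := by
  have hu0 : (0:ℝ) < u := by linarith
  have h1 : Real.log (Real.sqrt u) ≤ Real.sqrt u - 1 :=
    Real.log_le_sub_one_of_pos (Real.sqrt_pos.2 hu0)
  have h2 : Real.log u = 2 * Real.log (Real.sqrt u) := by rw [Real.log_sqrt hu0.le]; ring
  have a1 := Real.sq_sqrt (show (0:ℝ) ≤ u - 1 by linarith)
  have a2 := Real.sq_sqrt hu0.le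
  have h3 : Real.sqrt u ≤ Real.sqrt (u - 1) + 1 := by
    nlinarith [Real.sqrt_nonneg (u - 1), Real.sqrt_nonneg u,
      sq_nonneg (Real.sqrt u - Real.sqrt (u - 1) - 1),
      sq_nonneg (Real.sqrt u + Real.sqrt (u - 1) + 1)]
  linarith

private lemma gaux_mul_log_le {u : ℝ} (hu : 1 < u) :
    gaux u * Real.log u ≤ 4 * u ^ (-(3/2) : ℝ) := by
  have hu0 : (0:ℝ) < u := by linarith
  have hv : (0:ℝ) < 1 - u⁻¹ := by
    rw [sub_pos]; exact inv_lt_one_of_one_lt₀ hu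
  have hsq : 0 < Real.sqrt (1 - u⁻¹) := Real.sqrt_pos.2 hv
  have hsqu : 0 < Real.sqrt u := Real.sqrt_pos.2 hu0
  have hprod : Real.sqrt u * Real.sqrt (1 - u⁻¹) = Real.sqrt (u - 1) := by
    rw [← Real.sqrt_mul hu0.le]
    congr 1
    field_simp
  have hrw : (4:ℝ) * u ^ (-(3/2) : ℝ) = 4 * Real.sqrt u / u ^ 2 := by
    rw [Real.sqrt_eq_rpow, mul_div_assoc, ← Real.rpow_natCast u 2, ← Real.rpow_sub hu0]
    norm_num
  rw [hrw]
  unfold gaux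
  rw [div_mul_eq_mul_div, div_le_div_iff₀ (by positivity) (by positivity)]
  have hlog := log_le_two_sqrt hu
  have hlog0 : 0 ≤ Real.log u := Real.log_nonneg hu.le
  nlinarith [mul_le_mul_of_nonneg_right hlog (sq_nonneg u), hprod, sq_nonneg u, hsqu, hsq]

private lemma F_aesm (α : ℝ) (s : ℂ) (hs : 0 < s.re) :
    AEStronglyMeasurable (fun u : ℝ => Complex.exp (-(2 * ↑π * Complex.I * ↑α * ↑u)) *
      (u : ℂ) ^ (-s - 2) * lerchPhiOne (((u : ℂ))⁻¹ ^ 2) (1 + s / 2))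
      (volume.restrict (Set.Ioi (1:ℝ))) := by
  have he : Continuous fun u : ℝ => Complex.exp (-(2 * ↑π * Complex.I * ↑α * ↑u)) :=
    Complex.continuous_exp.comp ((continuous_const.mul Complex.continuous_ofReal).neg)
  have hc : ContinuousOn (fun u : ℝ => (u:ℂ) ^ (-s - 2)) (Set.Ioi (1:ℝ)) := by
    intro u hu
    apply ContinuousAt.continuousWithinAt
    exact (continuousAt_cpow_const
      (Complex.ofReal_mem_slitPlane.2 (lt_trans one_pos hu))).comp
      Complex.continuous_ofReal.continuousAt
  have hL : AEStronglyMeasurable (fun u : ℝ => lerchPhiOne (((u : ℂ))⁻¹ ^ 2) (1 + s / 2))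
      (volume.restrict (Set.Ioi (1:ℝ))) := by
    apply aestronglyMeasurable_of_tendsto_ae (f := fun (N : ℕ) (u : ℝ) =>
      ∑ n ∈ Finset.range N, (((u : ℂ))⁻¹ ^ 2) ^ n / ((n : ℂ) + (1 + s / 2))) Filter.atTop
    · intro N
      apply ContinuousOn.aestronglyMeasurable _ measurableSet_Ioi
      apply continuousOn_finset_sum
      intro n _
      apply ContinuousOn.div_const
      apply ContinuousOn.pow
      apply ContinuousOn.pow
      exact ContinuousOn.inv₀ Complex.continuous_ofReal.continuousOn
        (fun u hu => by exact_mod_cast (ne_of_gt (lt_trans one_pos hu)))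
    · filter_upwards [ae_restrict_mem measurableSet_Ioi] with u hu
      have h0 : (0:ℝ) < u⁻¹ ^ 2 := by
        have : (0:ℝ) < u := lt_trans one_pos hu
        positivity
      have h1 := inv_sq_lt_one hu
      have hsum := (lerch_summable s hs h0 h1).hasSum.tendsto_sum_nat
      rw [show (fun N : ℕ => ∑ n ∈ Finset.range N, (((u : ℂ))⁻¹ ^ 2) ^ n / ((n : ℂ) + (1 + s / 2)))
        = fun N : ℕ => ∑ n ∈ Finset.range N, ((u⁻¹ ^ 2 : ℝ) : ℂ) ^ n / ((n : ℂ) + (1 + s / 2))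
        from by simp_rw [hz_cast]]
      unfold lerchPhiOne
      rw [hz_cast]
      exact hsum
  exact (he.aestronglyMeasurable.mul (hc.aestronglyMeasurable measurableSet_Ioi)).mul hL

private lemma F_integrableOn (α : ℝ) (s : ℂ) (hs : 0 < s.re) :
    IntegrableOn (fun u : ℝ => Complex.exp (-(2 * ↑π * Complex.I * ↑α * ↑u)) *
      (u : ℂ) ^ (-s - 2) * lerchPhiOne (((u : ℂ))⁻¹ ^ 2) (1 + s / 2)) (Set.Ioi (1:ℝ)) := by
  apply Integrable.mono' (integrableOn_gaux le_rfl) (F_aesm α s hs)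
  filter_upwards [ae_restrict_mem measurableSet_Ioi] with u hu using F_norm_le α s hs hu

private lemma FL_integrableOn (α : ℝ) (s : ℂ) (hs : 0 < s.re) :
    IntegrableOn (fun u : ℝ => Complex.exp (-(2 * ↑π * Complex.I * ↑α * ↑u)) *
      (u : ℂ) ^ (-s - 2) * lerchPhiOne (((u : ℂ))⁻¹ ^ 2) (1 + s / 2) * ((Real.log u : ℝ) : ℂ))
      (Set.Ioi (1:ℝ)) := by
  have hbd : IntegrableOn (fun u : ℝ => 4 * u ^ (-(3/2) : ℝ)) (Set.Ioi (1:ℝ)) :=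
    (integrableOn_Ioi_rpow_of_lt (by norm_num) one_pos).const_mul 4
  apply Integrable.mono' hbd ((F_aesm α s hs).mul
    ((Complex.measurable_ofReal.comp Real.measurable_log).aestronglyMeasurable))
  filter_upwards [ae_restrict_mem measurableSet_Ioi] with u hu
  have hlog0 : 0 ≤ Real.log u := Real.log_nonneg (le_of_lt hu)
  simp only [Pi.mul_apply, Function.comp_apply]
  rw [norm_mul, Complex.norm_real, Real.norm_of_nonneg hlog0]
  calc ‖_‖ * Real.log u ≤ gaux u * Real.log u :=
        mul_le_mul_of_nonneg_right (F_norm_le α s hs hu) hlog0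
    _ ≤ 4 * u ^ (-(3/2) : ℝ) := gaux_mul_log_le hu

private lemma FL_norm_le (α : ℝ) (s : ℂ) (hs : 0 < s.re) {u : ℝ} (hu : 1 < u) :
    ‖Complex.exp (-(2 * ↑π * Complex.I * ↑α * ↑u)) * (u : ℂ) ^ (-s - 2) *
      lerchPhiOne (((u : ℂ))⁻¹ ^ 2) (1 + s / 2) * ((Real.log u : ℝ) : ℂ)‖
      ≤ 4 * u ^ (-(3/2) : ℝ) := by
  have hlog0 : 0 ≤ Real.log u := Real.log_nonneg (le_of_lt hu)
  rw [norm_mul, Complex.norm_real, Real.norm_of_nonneg hlog0]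
  calc ‖_‖ * Real.log u ≤ gaux u * Real.log u :=
        mul_le_mul_of_nonneg_right (F_norm_le α s hs hu) hlog0
    _ ≤ 4 * u ^ (-(3/2) : ℝ) := gaux_mul_log_le hu


theorem stmt_18 (α : ℝ) (hα : 0 < α) (s : ℂ) (hs : 0 < s.re) :
    ∃ C : ℝ,
      IntegrableOn (fun u : ℝ => Complex.exp (-(2 * π * Complex.I * α * u)) *
          (u : ℂ) ^ (-s - 2) * lerchPhiOne (((u : ℂ)) ⁻¹ ^ 2) (1 + s / 2))
        (Set.Ioi (1 : ℝ)) ∧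
      ∀ x : ℝ, 2 ≤ x →
        ‖(∫ u in (1:ℝ)..x, Complex.exp (-(2 * π * Complex.I * α * u)) *
              (u : ℂ) ^ (-s - 2) * lerchPhiOne (((u : ℂ)) ⁻¹ ^ 2) (1 + s / 2) *
              (1 - Real.log u / Real.log x))
          - ∫ u in Set.Ioi (1 : ℝ), Complex.exp (-(2 * π * Complex.I * α * u)) *
              (u : ℂ) ^ (-s - 2) * lerchPhiOne (((u : ℂ)) ⁻¹ ^ 2) (1 + s / 2)‖
          ≤ C / Real.log x := by
  set F : ℝ → ℂ := fun u : ℝ => Complex.exp (-(2 * ↑π * Complex.I * ↑α * ↑u)) *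
    (u : ℂ) ^ (-s - 2) * lerchPhiOne (((u : ℂ))⁻¹ ^ 2) (1 + s / 2) with hFdef
  refine ⟨12, F_integrableOn α s hs, fun x hx => ?_⟩
  have hx1 : (1:ℝ) < x := lt_of_lt_of_le one_lt_two hx
  have hx0 : (0:ℝ) < x := by linarith
  have hlogx : 0 < Real.log x := Real.log_pos hx1
  have hlogxC : ((Real.log x : ℝ) : ℂ) ≠ 0 := Complex.ofReal_ne_zero.2 hlogx.ne'
  have hFIoi := F_integrableOn α s hs
  have hFIoc : IntegrableOn F (Set.Ioc 1 x) := hFIoi.mono_set Set.Ioc_subset_Ioi_self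
  have hFIx : IntegrableOn F (Set.Ioi x) := hFIoi.mono_set (Set.Ioi_subset_Ioi hx1.le)
  have hFLIoc : IntegrableOn (fun u : ℝ => F u * ((Real.log u : ℝ) : ℂ)) (Set.Ioc 1 x) :=
    (FL_integrableOn α s hs).mono_set Set.Ioc_subset_Ioi_self
  have hFi : IntervalIntegrable F volume 1 x :=
    (intervalIntegrable_iff_integrableOn_Ioc_of_le hx1.le).2 hFIoc
  have hFLi : IntervalIntegrable (fun u : ℝ => F u * ((Real.log u : ℝ) : ℂ)) volume 1 x :=
    (intervalIntegrable_iff_integrableOn_Ioc_of_le hx1.le).2 hFLIoc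
  have key : (∫ u in (1:ℝ)..x, F u * (1 - (Real.log u : ℂ) / (Real.log x : ℂ)))
      = (∫ u in (1:ℝ)..x, F u)
        - ((Real.log x : ℝ) : ℂ)⁻¹ * ∫ u in (1:ℝ)..x, F u * ((Real.log u : ℝ) : ℂ) := by
    rw [← intervalIntegral.integral_const_mul, ← intervalIntegral.integral_sub hFi
      (hFLi.const_mul _)]
    apply intervalIntegral.integral_congr
    intro u _
    field_simp
  have hsplit : ∫ u in Set.Ioi (1:ℝ), F u = (∫ u in Set.Ioc 1 x, F u) + ∫ u in Set.Ioi x, F u := by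
    rw [← setIntegral_union (Set.Ioc_disjoint_Ioi le_rfl) measurableSet_Ioi hFIoc hFIx,
      Set.Ioc_union_Ioi_eq_Ioi hx1.le]
  have hIocInt : ∫ u in (1:ℝ)..x, F u = ∫ u in Set.Ioc 1 x, F u :=
    intervalIntegral.integral_of_le hx1.le
  have hdiff : (∫ u in (1:ℝ)..x, F u * (1 - (Real.log u : ℂ) / (Real.log x : ℂ)))
        - ∫ u in Set.Ioi (1:ℝ), F u
      = -(((Real.log x : ℝ) : ℂ)⁻¹ * ∫ u in (1:ℝ)..x, F u * ((Real.log u : ℝ) : ℂ))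
        - ∫ u in Set.Ioi x, F u := by
    rw [key, hIocInt, hsplit]; ring
  -- bound on the logarithmic integral
  have hbd : IntegrableOn (fun u : ℝ => 4 * u ^ (-(3/2) : ℝ)) (Set.Ioi (1:ℝ)) :=
    (integrableOn_Ioi_rpow_of_lt (by norm_num) one_pos).const_mul 4
  have hIval : ∫ u in Set.Ioi (1:ℝ), 4 * u ^ (-(3/2) : ℝ) = 8 := by
    rw [MeasureTheory.integral_const_mul, integral_Ioi_rpow_of_lt (by norm_num) one_pos]
    norm_num
  have h1 : ‖∫ u in (1:ℝ)..x, F u * ((Real.log u : ℝ) : ℂ)‖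
      ≤ |∫ u in (1:ℝ)..x, 4 * u ^ (-(3/2) : ℝ)| := by
    apply intervalIntegral.norm_integral_le_abs_of_norm_le
    · rw [Set.uIoc_of_le hx1.le]
      filter_upwards [ae_restrict_mem measurableSet_Ioc] with u hu
      exact FL_norm_le α s hs hu.1
    · exact (intervalIntegrable_iff_integrableOn_Ioc_of_le hx1.le).2
        (hbd.mono_set Set.Ioc_subset_Ioi_self)
  have h2 : ∫ u in (1:ℝ)..x, 4 * u ^ (-(3/2) : ℝ) ≤ 8 := by
    rw [intervalIntegral.integral_of_le hx1.le, ← hIval]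
    apply setIntegral_mono_set hbd
    · filter_upwards [ae_restrict_mem measurableSet_Ioi] with u hu
      have hu0 : (0:ℝ) < u := lt_trans one_pos hu
      positivity
    · exact (Set.Ioc_subset_Ioi_self).eventuallyLE
  have h3 : 0 ≤ ∫ u in (1:ℝ)..x, 4 * u ^ (-(3/2) : ℝ) := by
    apply intervalIntegral.integral_nonneg hx1.le
    intro u hu
    have hu0 : (0:ℝ) < u := lt_of_lt_of_le one_pos hu.1
    positivity
  have hb1 : ‖∫ u in (1:ℝ)..x, F u * ((Real.log u : ℝ) : ℂ)‖ ≤ 8 := by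
    refine h1.trans ?_
    rw [_root_.abs_of_nonneg h3]
    exact h2
  -- bound on the tail integral
  have h4 : ‖∫ u in Set.Ioi x, F u‖ ≤ ∫ u in Set.Ioi x, gaux u := by
    apply MeasureTheory.norm_integral_le_of_norm_le (integrableOn_gaux hx1.le)
    filter_upwards [ae_restrict_mem measurableSet_Ioi] with u hu
    exact F_norm_le α s hs (lt_trans hx1 hu)
  rw [integral_gaux_Ioi hx1.le] at h4
  have hxv : (0:ℝ) < 1 - x⁻¹ := by
    rw [sub_pos]; exact inv_lt_one_of_one_lt₀ hx1
  have h5 : 1 - x⁻¹ ≤ Real.sqrt (1 - x⁻¹) := by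
    have h6 := Real.sqrt_le_sqrt (show (1 - x⁻¹) ^ 2 ≤ 1 - x⁻¹ by nlinarith [inv_pos.2 hx0, hxv])
    rwa [Real.sqrt_sq hxv.le] at h6
  have h7 : 4 - Gaux x ≤ 4 * x⁻¹ := by
    unfold Gaux
    nlinarith
  have h8 : Real.log x ≤ x := (Real.log_le_sub_one_of_pos hx0).trans (by linarith)
  have h9 : x⁻¹ ≤ (Real.log x)⁻¹ := by
    apply inv_anti₀ hlogx h8
  have hb2 : ‖∫ u in Set.Ioi x, F u‖ ≤ 4 / Real.log x := by
    rw [div_eq_mul_inv]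
    calc ‖∫ u in Set.Ioi x, F u‖ ≤ 4 - Gaux x := h4
      _ ≤ 4 * x⁻¹ := h7
      _ ≤ 4 * (Real.log x)⁻¹ := by linarith
  calc ‖(∫ u in (1:ℝ)..x, F u * (1 - (Real.log u : ℂ) / (Real.log x : ℂ)))
        - ∫ u in Set.Ioi (1:ℝ), F u‖
      = ‖-(((Real.log x : ℝ) : ℂ)⁻¹ * ∫ u in (1:ℝ)..x, F u * ((Real.log u : ℝ) : ℂ))
          - ∫ u in Set.Ioi x, F u‖ := by rw [hdiff]
    _ ≤ ‖-(((Real.log x : ℝ) : ℂ)⁻¹ * ∫ u in (1:ℝ)..x, F u * ((Real.log u : ℝ) : ℂ))‖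
          + ‖∫ u in Set.Ioi x, F u‖ := norm_sub_le _ _
    _ = (Real.log x)⁻¹ * ‖∫ u in (1:ℝ)..x, F u * ((Real.log u : ℝ) : ℂ)‖
          + ‖∫ u in Set.Ioi x, F u‖ := by
        rw [norm_neg, norm_mul, norm_inv, Complex.norm_real, Real.norm_of_nonneg hlogx.le]
    _ ≤ (Real.log x)⁻¹ * 8 + 4 / Real.log x :=
        add_le_add (mul_le_mul_of_nonneg_left hb1 (by positivity)) hb2
    _ = 12 / Real.log x := by field_simp; ring
end
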